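/- (Two-agent Poisson-picking pools: greedy is a best response to everything.) Let m ≥ 2, let λ₁, …, λ_m > 0 with λ₁ ≥ λ_j for every j, and define the antisymmetric payoff kernel A : {1,…,m}² → ℝ by A(j,k) = P₍>₎(λ_j,λ_k) − P₍<₎(λ_j,λ_k) for j ≠ k and A(j,j) = 0 (A(j,k) is the expected payoff of an agent choosing process j against an opponent choosing process k in the two-agent Poisson-picking pool). Then for every probability vector s : {1,…,m} → [0,1] with Σ_k s(k) = 1 and every j ∈ {1,…,m}, Σ_k s(k)·A(1,k) ≥ Σ_k s(k)·A(j,k); that is, choosing a process of maximal rate is a best response no matter what mixed strategy the other agent uses. -/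

import Mathlib

/-- The Poisson probability mass function with rate `l`. -/
noncomputable def poissonPMF (l : ℝ) (i : ℕ) : ℝ :=
  Real.exp (-l) * l ^ i / (Nat.factorial i)

/-- Probability that the first of two independent Poisson counts (rates `l`, `m`)
strictly exceeds the second. -/
noncomputable def Pgt (l m : ℝ) : ℝ :=
  ∑' p : ℕ × ℕ, if p.2 < p.1 then poissonPMF l p.1 * poissonPMF m p.2 else 0

/-- Probability that the first of two independent Poisson counts (rates `l`, `m`)
is strictly less than the second. -/
noncomputable def Plt (l m : ℝ) : ℝ :=
  ∑' p : ℕ × ℕ, if p.1 < p.2 then poissonPMF l p.1 * poissonPMF m p.2 else 0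

noncomputable def pcdf (l : ℝ) (n : ℕ) : ℝ := ∑ i ∈ Finset.range n, poissonPMF l i

lemma hasDerivAt_poissonPMF (l : ℝ) (n : ℕ) :
    HasDerivAt (fun x => poissonPMF x (n + 1)) (poissonPMF l n - poissonPMF l (n + 1)) l := by
  have hexp : HasDerivAt (fun x : ℝ => Real.exp (-x)) (-Real.exp (-l)) l := by
    simpa [Function.comp_def] using ((Real.hasDerivAt_exp (-l)).comp l (hasDerivAt_neg l))
  have hpow : HasDerivAt (fun x : ℝ => x ^ (n + 1)) ((n + 1) * l ^ n) l := by
    simpa using hasDerivAt_pow (n + 1) l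
  have := (hexp.mul hpow).div_const ((Nat.factorial (n + 1) : ℝ))
  refine this.congr_deriv ?_
  unfold poissonPMF
  rw [Nat.factorial_succ]
  have h1 : (Nat.factorial n : ℝ) ≠ 0 := by exact_mod_cast Nat.factorial_ne_zero n
  field_simp
  push_cast
  ring

lemma hasDerivAt_pcdf (l : ℝ) (n : ℕ) :
    HasDerivAt (fun x => pcdf x (n + 1)) (-poissonPMF l n) l := by
  induction n with
  | zero =>
      have : HasDerivAt (fun x : ℝ => Real.exp (-x)) (-Real.exp (-l)) l := by
        simpa [Function.comp_def] using ((Real.hasDerivAt_exp (-l)).comp l (hasDerivAt_neg l))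
      have h2 : (fun x : ℝ => pcdf x 1) = fun x : ℝ => Real.exp (-x) := by
        funext x; simp [pcdf, poissonPMF]
      rw [h2]
      simpa [poissonPMF] using this
  | succ n ih =>
      have h2 : (fun x : ℝ => pcdf x (n + 2)) =
          fun x : ℝ => pcdf x (n + 1) + poissonPMF x (n + 1) := by
        funext x; simp [pcdf, Finset.sum_range_succ]
      rw [h2]
      have := ih.add (hasDerivAt_poissonPMF l n)
      refine this.congr_deriv ?_
      ring

lemma pcdf_anti {a b : ℝ} (ha : 0 ≤ a) (hab : a ≤ b) (n : ℕ) : pcdf b n ≤ pcdf a n := by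
  cases n with
  | zero => simp [pcdf]
  | succ n =>
      have hdiff : ∀ x : ℝ, DifferentiableAt ℝ (fun y => pcdf y (n + 1)) x :=
        fun x => (hasDerivAt_pcdf x n).differentiableAt
      have := antitoneOn_of_deriv_nonpos (convex_Ici (0 : ℝ))
        (Continuous.continuousOn (by
          exact Differentiable.continuous fun x => hdiff x))
        (fun x hx => (hdiff x).differentiableWithinAt)
        (fun x hx => by
          rw [(hasDerivAt_pcdf x n).deriv]
          have hx0 : (0 : ℝ) < x := by simpa using hx
          have : 0 ≤ poissonPMF x n := by unfold poissonPMF; positivity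
          linarith)
      exact this (Set.mem_Ici.2 ha) (Set.mem_Ici.2 (le_trans ha hab)) hab

lemma poissonPMF_nonneg {l : ℝ} (hl : 0 ≤ l) (i : ℕ) : 0 ≤ poissonPMF l i := by
  unfold poissonPMF; positivity

lemma summable_poissonPMF (l : ℝ) : Summable (poissonPMF l) := by
  have := (Real.summable_pow_div_factorial l).mul_left (Real.exp (-l))
  refine this.congr fun i => ?_
  unfold poissonPMF; ring

lemma tsum_poissonPMF (l : ℝ) : ∑' i, poissonPMF l i = 1 := by
  unfold poissonPMF
  rw [show (fun i : ℕ => Real.exp (-l) * l ^ i / (Nat.factorial i))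
      = fun i : ℕ => Real.exp (-l) * (l ^ i / (Nat.factorial i)) by funext i; ring]
  rw [tsum_mul_left, show ∑' i : ℕ, l ^ i / (Nat.factorial i) = Real.exp l by
    rw [Real.exp_eq_exp_ℝ, NormedSpace.exp_eq_tsum_div],
    ← Real.exp_add]
  simp

lemma pcdf_nonneg {l : ℝ} (hl : 0 ≤ l) (n : ℕ) : 0 ≤ pcdf l n :=
  Finset.sum_nonneg fun i _ => poissonPMF_nonneg hl i

lemma pcdf_le_one {l : ℝ} (hl : 0 ≤ l) (n : ℕ) : pcdf l n ≤ 1 := by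
  rw [← tsum_poissonPMF l]
  exact Summable.sum_le_tsum (Finset.range n) (fun i _ => poissonPMF_nonneg hl i) (summable_poissonPMF l)

lemma summable_pair {l m : ℝ} (hl : 0 ≤ l) (hm : 0 ≤ m) :
    Summable fun p : ℕ × ℕ => poissonPMF l p.1 * poissonPMF m p.2 :=
  (summable_poissonPMF l).mul_of_nonneg (summable_poissonPMF m)
    (fun i => poissonPMF_nonneg hl i) (fun i => poissonPMF_nonneg hm i)

lemma tsum_ite_gt {l : ℝ} (j : ℕ) :
    ∑' i, (if j < i then poissonPMF l i else 0) = 1 - pcdf l (j + 1) := by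
  have hpt : ∀ i : ℕ, (if j < i then poissonPMF l i else 0)
      = poissonPMF l i - (if i < j + 1 then poissonPMF l i else 0) := by
    intro i
    by_cases h : j < i
    · rw [if_pos h, if_neg (by omega)]; ring
    · rw [if_neg h, if_pos (by omega)]; ring
  have hsum2 : Summable fun i => (if i < j + 1 then poissonPMF l i else 0) := by
    apply summable_of_finite_support
    apply Set.Finite.subset (Set.finite_Iio (j + 1))
    intro i hi
    simp only [Function.mem_support] at hi
    by_contra hc
    simp only [Set.mem_Iio, not_lt] at hc
    exact hi (if_neg (by omega))
  calc ∑' i, (if j < i then poissonPMF l i else 0)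
      = ∑' i, (poissonPMF l i - (if i < j + 1 then poissonPMF l i else 0)) := by
        exact tsum_congr hpt
    _ = (∑' i, poissonPMF l i) - ∑' i, (if i < j + 1 then poissonPMF l i else 0) :=
        Summable.tsum_sub (summable_poissonPMF l) hsum2
    _ = 1 - pcdf l (j + 1) := by
        rw [tsum_poissonPMF]
        congr 1
        rw [tsum_eq_sum (s := Finset.range (j + 1))
          (fun i hi => if_neg (by simp at hi; omega))]
        exact Finset.sum_congr rfl fun i hi => if_pos (by simpa using hi)

lemma tsum_ite_lt {l : ℝ} (j : ℕ) :
    ∑' i, (if i < j then poissonPMF l i else 0) = pcdf l j := by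
  rw [tsum_eq_sum (s := Finset.range j) (fun i hi => if_neg (by simpa using hi))]
  exact Finset.sum_congr rfl fun i hi => if_pos (by simpa using hi)

lemma Plt_eq_Pgt (l m : ℝ) : Plt l m = Pgt m l := by
  unfold Plt Pgt
  rw [← (Equiv.prodComm ℕ ℕ).tsum_eq
    (fun p : ℕ × ℕ => if p.2 < p.1 then poissonPMF m p.1 * poissonPMF l p.2 else 0)]
  apply tsum_congr
  intro q
  simp only [Equiv.prodComm_apply, Prod.fst_swap, Prod.snd_swap]
  by_cases h : q.1 < q.2
  · simp only [if_pos h, mul_comm]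
  · simp [h]

lemma summable_ite_pair {l m : ℝ} (hl : 0 ≤ l) (hm : 0 ≤ m)
    (P : ℕ × ℕ → Prop) [DecidablePred P] :
    Summable fun q : ℕ × ℕ => if P q then poissonPMF l q.2 * poissonPMF m q.1 else 0 := by
  apply Summable.of_nonneg_of_le
    (f := fun q : ℕ × ℕ => poissonPMF m q.1 * poissonPMF l q.2)
  · intro q
    by_cases h : P q
    · rw [if_pos h]; exact mul_nonneg (poissonPMF_nonneg hl _) (poissonPMF_nonneg hm _)
    · rw [if_neg h]
  · intro q
    by_cases h : P q
    · rw [if_pos h, mul_comm]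
    · rw [if_neg h]; exact mul_nonneg (poissonPMF_nonneg hm _) (poissonPMF_nonneg hl _)
  · exact summable_pair hm hl

lemma summable_ite_row {l m : ℝ} (hl : 0 ≤ l) (hm : 0 ≤ m) (j : ℕ)
    (P : ℕ → Prop) [DecidablePred P] :
    Summable fun i : ℕ => if P i then poissonPMF l i * poissonPMF m j else 0 := by
  apply Summable.of_nonneg_of_le (f := fun i : ℕ => poissonPMF l i * poissonPMF m j)
  · intro i
    by_cases h : P i
    · rw [if_pos h]; exact mul_nonneg (poissonPMF_nonneg hl _) (poissonPMF_nonneg hm _)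
    · rw [if_neg h]
  · intro i
    by_cases h : P i
    · rw [if_pos h]
    · rw [if_neg h]; exact mul_nonneg (poissonPMF_nonneg hl _) (poissonPMF_nonneg hm _)
  · exact (summable_poissonPMF l).mul_right _

lemma Pgt_eq {l m : ℝ} (hl : 0 ≤ l) (hm : 0 ≤ m) :
    Pgt l m = ∑' j, poissonPMF m j * (1 - pcdf l (j + 1)) := by
  unfold Pgt
  rw [← (Equiv.prodComm ℕ ℕ).tsum_eq
    (fun p : ℕ × ℕ => if p.2 < p.1 then poissonPMF l p.1 * poissonPMF m p.2 else 0)]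
  have hG : (fun q : ℕ × ℕ =>
      (fun p : ℕ × ℕ => if p.2 < p.1 then poissonPMF l p.1 * poissonPMF m p.2 else 0)
        ((Equiv.prodComm ℕ ℕ) q))
      = fun q : ℕ × ℕ => if q.1 < q.2 then poissonPMF l q.2 * poissonPMF m q.1 else 0 := by
    funext q; rfl
  rw [hG, Summable.tsum_prod' (summable_ite_pair hl hm _)
    (fun b => by
      have := summable_ite_row hl hm b (fun i => b < i)
      exact this.congr fun i => by by_cases h : b < i <;> simp [h])]
  apply tsum_congr
  intro j
  have : ∑' i, (if j < i then poissonPMF l i * poissonPMF m j else 0)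
      = (∑' i, (if j < i then poissonPMF l i else 0)) * poissonPMF m j := by
    rw [← tsum_mul_right]
    exact tsum_congr fun i => by
      by_cases h : j < i
      · rw [if_pos h, if_pos h]
      · rw [if_neg h, if_neg h, zero_mul]
  rw [this, tsum_ite_gt, mul_comm]

lemma Plt_eq {l m : ℝ} (hl : 0 ≤ l) (hm : 0 ≤ m) :
    Plt l m = ∑' j, poissonPMF m j * pcdf l j := by
  unfold Plt
  rw [← (Equiv.prodComm ℕ ℕ).tsum_eq
    (fun p : ℕ × ℕ => if p.1 < p.2 then poissonPMF l p.1 * poissonPMF m p.2 else 0)]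
  have hG : (fun q : ℕ × ℕ =>
      (fun p : ℕ × ℕ => if p.1 < p.2 then poissonPMF l p.1 * poissonPMF m p.2 else 0)
        ((Equiv.prodComm ℕ ℕ) q))
      = fun q : ℕ × ℕ => if q.2 < q.1 then poissonPMF l q.2 * poissonPMF m q.1 else 0 := by
    funext q; rfl
  rw [hG, Summable.tsum_prod' (summable_ite_pair hl hm _)
    (fun b => by
      have := summable_ite_row hl hm b (fun i => i < b)
      exact this.congr fun i => by by_cases h : i < b <;> simp [h])]
  apply tsum_congr
  intro j
  have : ∑' i, (if i < j then poissonPMF l i * poissonPMF m j else 0)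
      = (∑' i, (if i < j then poissonPMF l i else 0)) * poissonPMF m j := by
    rw [← tsum_mul_right]
    exact tsum_congr fun i => by
      by_cases h : i < j
      · rw [if_pos h, if_pos h]
      · rw [if_neg h, if_neg h, zero_mul]
  rw [this, tsum_ite_lt, mul_comm]

lemma summable_term1 {l m : ℝ} (hl : 0 ≤ l) (hm : 0 ≤ m) :
    Summable fun j => poissonPMF m j * (1 - pcdf l (j + 1)) := by
  apply Summable.of_nonneg_of_le (f := poissonPMF m)
  · intro j
    exact mul_nonneg (poissonPMF_nonneg hm j) (by linarith [pcdf_le_one hl (j + 1)])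
  · intro j
    nlinarith [poissonPMF_nonneg hm j, pcdf_nonneg hl (j + 1), pcdf_le_one hl (j + 1)]
  · exact summable_poissonPMF m

lemma summable_term2 {l m : ℝ} (hl : 0 ≤ l) (hm : 0 ≤ m) :
    Summable fun j => poissonPMF m j * pcdf l j := by
  apply Summable.of_nonneg_of_le (f := poissonPMF m)
  · intro j
    exact mul_nonneg (poissonPMF_nonneg hm j) (pcdf_nonneg hl j)
  · intro j
    nlinarith [poissonPMF_nonneg hm j, pcdf_nonneg hl j, pcdf_le_one hl j]
  · exact summable_poissonPMF m

lemma payoff_mono {a b v : ℝ} (hb : 0 ≤ b) (hab : b ≤ a) (hv : 0 ≤ v) :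
    Pgt b v - Plt b v ≤ Pgt a v - Plt a v := by
  have ha : 0 ≤ a := le_trans hb hab
  rw [Pgt_eq hb hv, Plt_eq hb hv, Pgt_eq ha hv, Plt_eq ha hv,
    ← Summable.tsum_sub (summable_term1 hb hv) (summable_term2 hb hv),
    ← Summable.tsum_sub (summable_term1 ha hv) (summable_term2 ha hv)]
  apply Summable.tsum_le_tsum
  · intro j
    have h1 := pcdf_anti hb hab (j + 1)
    have h2 := pcdf_anti hb hab j
    have h3 := poissonPMF_nonneg hv j
    nlinarith
  · exact (summable_term1 hb hv).sub (summable_term2 hb hv)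
  · exact (summable_term1 ha hv).sub (summable_term2 ha hv)

/-- Two-agent Poisson-picking pools: greedy is a best response to everything.
Processes are indexed by `Fin m` (index `0` playing the role of process 1, of
maximal rate), `A j k` is the expected payoff of an agent choosing process `j`
against an opponent choosing process `k`, and `s` is an arbitrary mixed strategy of
the opponent. Then choosing the process `0` of maximal rate is a best response:
for every `j`, `∑ k, s k * A 0 k ≥ ∑ k, s k * A j k`. -/
theorem two_agent_greedy_best_response
    (m : ℕ) [NeZero m] (hm : 2 ≤ m)
    (lam : Fin m → ℝ) (hpos : ∀ j, 0 < lam j) (hmax : ∀ j, lam j ≤ lam 0)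
    (A : Fin m → Fin m → ℝ)
    (hA : ∀ j k : Fin m, A j k =
      if j = k then 0 else Pgt (lam j) (lam k) - Plt (lam j) (lam k))
    (s : Fin m → ℝ) (hs0 : ∀ k, 0 ≤ s k) (hs1 : ∀ k, s k ≤ 1) (hsum : ∑ k, s k = 1)
    (j : Fin m) :
    ∑ k, s k * A j k ≤ ∑ k, s k * A 0 k := by
  have key : ∀ k, A j k ≤ A 0 k := by
    intro k
    by_cases hj0 : j = 0
    · rw [hj0]
    have hmono := payoff_mono (le_of_lt (hpos j)) (hmax j) (le_of_lt (hpos k))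
    have hdiag : ∀ v : Fin m, Pgt (lam v) (lam v) - Plt (lam v) (lam v) = 0 := by
      intro v; rw [Plt_eq_Pgt]; ring
    by_cases hk0 : k = 0
    · subst hk0
      rw [hA j 0, hA 0 0, if_neg hj0, if_pos rfl]
      calc Pgt (lam j) (lam 0) - Plt (lam j) (lam 0)
          ≤ Pgt (lam 0) (lam 0) - Plt (lam 0) (lam 0) := hmono
        _ = 0 := hdiag 0
    by_cases hjk : j = k
    · subst hjk
      rw [hA j j, hA 0 j, if_pos rfl, if_neg (fun h => hj0 h.symm)]
      calc (0 : ℝ) = Pgt (lam j) (lam j) - Plt (lam j) (lam j) := (hdiag j).symm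
        _ ≤ Pgt (lam 0) (lam j) - Plt (lam 0) (lam j) :=
            payoff_mono (le_of_lt (hpos j)) (hmax j) (le_of_lt (hpos j))
    · rw [hA j k, hA 0 k, if_neg hjk, if_neg (fun h => hk0 h.symm)]
      exact hmono
  exact Finset.sum_le_sum fun k _ => mul_le_mul_of_nonneg_left (key k) (hs0 k)
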